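/- arXiv:1412.1975 — 2 statements merged into one kernel-verified Lean document; each statement's English description precedes it below -/
import Mathlib

section
/- Let {f_1,…,f_q} be an IFS of injective contractions of a complete metric space whose attractor T is connected, and assume that f_α(T) ∩ f_β(T) is not a singleton for every pair of nonempty finite words α, β over {1,…,q}. Then either T has a cut point, or every irreducible cut set X of T is a perfect set (closed in T with no isolated points). -/
/-!
Suppose `T` has no cut point, and let `X` be an irreducible cut set with `T \ X = U ∪ V` separated.
Irreducibility forces `X = T ∩ closure U ∩ closure V`, which is closed: a point of `X` outside
`closure U ∪ closure V` would make the boundary of a small neighbourhood a smaller closed cut set,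
and then `T ∩ closure U ∩ closure V ⊆ X` is itself a closed cut set.

If `x ∈ X` were isolated, take `n` so large that every piece `f_w(T)`, `|w| = n`, through `x`
misses `X \ {x}`. Such a piece is an injective continuous image of `T`, so `x` does not cut it, and
it lies in `U ∪ {x}` or in `V ∪ {x}`. As `x` is adherent to both `U` and `V`, pieces of both kinds
occur, and two of them meet exactly in `{x}`.
-/

open Set Filter Topology

/-- A set is the union of two nonempty separated sets. -/
def SepUnion {α : Type*} [TopologicalSpace α] (S : Set α) : Prop :=
  ∃ U V : Set α, S = U ∪ V ∧ U.Nonempty ∧ V.Nonempty ∧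
    closure U ∩ V = ∅ ∧ U ∩ closure V = ∅

/-- `X` is a cut set of `T`: `X ⊆ T` and `T \ X` is disconnected. -/
def IsCutSet {α : Type*} [TopologicalSpace α] (T X : Set α) : Prop :=
  X ⊆ T ∧ SepUnion (T \ X)

/-- `X` is an irreducible cut set of `T`. -/
def IsIrredCutSet {α : Type*} [TopologicalSpace α] (T X : Set α) : Prop :=
  IsCutSet T X ∧ ∀ X₀ : Set α, X₀ ⊂ X → closure X₀ ∩ T ⊆ X₀ → ¬ SepUnion (T \ X₀)

/-- `f_α` for a word `α` (a list of indices): composition of the maps. -/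
def wordMap {α : Type*} {q : ℕ} (f : Fin q → α → α) : List (Fin q) → α → α :=
  fun l => l.foldr (fun i g => f i ∘ g) id

section Separation

variable {α β : Type*} [TopologicalSpace α] [TopologicalSpace β]

theorem sepUnion_iff_not_isPreconnected {S : Set α} : SepUnion S ↔ ¬IsPreconnected S := by
  constructor
  · rintro ⟨U, V, rfl, ⟨u, hu⟩, ⟨v, hv⟩, hUV, hVU⟩ hpre
    obtain ⟨y, hy, hyV, hyU⟩ := hpre (closure V)ᶜ (closure U)ᶜ isClosed_closure.isOpen_compl
      isClosed_closure.isOpen_compl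
      (fun y hy => hy.elim (fun h => .inl fun h' => hVU.subset ⟨h, h'⟩)
        fun h => .inr fun h' => hUV.subset ⟨h', h⟩)
      ⟨u, .inl hu, fun h' => hVU.subset ⟨hu, h'⟩⟩ ⟨v, .inr hv, fun h' => hUV.subset ⟨h', hv⟩⟩
    exact hy.elim (fun h => hyU (subset_closure h)) fun h => hyV (subset_closure h)
  · intro h
    obtain ⟨u, v, hu, hv, hSuv, hSu, hSv, hSuv'⟩ : ∃ u v, IsOpen u ∧ IsOpen v ∧ S ⊆ u ∪ v ∧
        (S ∩ u).Nonempty ∧ (S ∩ v).Nonempty ∧ S ∩ (u ∩ v) = ∅ := by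
      simpa [IsPreconnected, not_nonempty_iff_eq_empty] using h
    have hSu_v : Disjoint (S ∩ u) v := by
      rw [disjoint_iff_inter_eq_empty, ← hSuv', inter_assoc]
    have hu_Sv : Disjoint u (S ∩ v) := by
      rw [disjoint_iff_inter_eq_empty, ← hSuv', inter_left_comm]
    refine ⟨S ∩ u, S ∩ v, ?_, hSu, hSv, ?_, ?_⟩
    · rw [← inter_union_distrib_left, inter_eq_left.2 hSuv]
    · exact disjoint_iff_inter_eq_empty.1 <|
        (hSu_v.closure_left hv).mono_right inter_subset_right
    · exact disjoint_iff_inter_eq_empty.1 <|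
        (hu_Sv.closure_right hu).mono_left inter_subset_right

theorem sepUnion_of_subset_union {S U V : Set α} (hUV : closure U ∩ V = ∅)
    (hVU : U ∩ closure V = ∅) (hS : S ⊆ U ∪ V) (hSU : (S ∩ U).Nonempty)
    (hSV : (S ∩ V).Nonempty) : SepUnion S :=
  ⟨S ∩ U, S ∩ V, by rw [← inter_union_distrib_left, inter_eq_left.2 hS], hSU, hSV,
    subset_eq_empty (inter_subset_inter (closure_mono inter_subset_right) inter_subset_right) hUV,
    subset_eq_empty (inter_subset_inter inter_subset_right (closure_mono inter_subset_right)) hVU⟩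

theorem not_sepUnion_image_diff_singleton {g : α → β} (hg : Continuous g)
    (hinj : Function.Injective g) {T : Set α} {z : α} (h : ¬SepUnion (T \ {z})) :
    ¬SepUnion (g '' T \ {g z}) := by
  rw [sepUnion_iff_not_isPreconnected, not_not] at h ⊢
  rw [← image_singleton, ← image_sdiff hinj]
  exact h.image g hg.continuousOn

theorem exists_mem_inter_nonempty_of_mem_closure {ι : Type*} [Finite ι] {P : ι → Set α}
    (hP : ∀ i, IsClosed (P i)) {S : Set α} (hS : S ⊆ ⋃ i, P i) {x : α} (hx : x ∈ closure S) :
    ∃ i, x ∈ P i ∧ (P i ∩ S).Nonempty := by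
  rw [← inter_eq_right.2 hS, iUnion_inter, closure_iUnion_of_finite, mem_iUnion] at hx
  obtain ⟨i, hi⟩ := hx
  exact ⟨i, closure_minimal inter_subset_left (hP i) hi, closure_nonempty_iff.1 ⟨x, hi⟩⟩

end Separation

namespace IsIrredCutSet

variable {α : Type*} [TopologicalSpace α] {T X U V : Set α}

theorem subset_closure_union [RegularSpace α] (hX : IsIrredCutSet T X) (hUV : T \ X = U ∪ V)
    (hU : U.Nonempty) : T ⊆ closure U ∪ closure V := by
  intro g hgT
  by_contra hg
  have hgX : g ∈ X := by
    by_contra hgX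
    exact hg ((hUV ▸ ⟨hgT, hgX⟩ : g ∈ U ∪ V).imp (subset_closure ·) (subset_closure ·))
  obtain ⟨t, ht, htc, htUV⟩ := exists_mem_nhds_isClosed_subset
    ((isClosed_closure.union isClosed_closure).isOpen_compl.mem_nhds hg)
  set W := interior t
  have hgW : g ∈ W := mem_interior_iff_mem_nhds.2 ht
  have hWUV : closure W ⊆ (closure U ∪ closure V)ᶜ :=
    (closure_minimal interior_subset htc).trans htUV
  -- the boundary of `W` inside `T` is a closed cut set strictly smaller than `X`
  set K := T ∩ (closure W \ W)
  have hKX : K ⊂ X := by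
    refine ⟨fun y ⟨hyT, hyW, _⟩ => ?_, fun hXK => (hXK hgX).2.2 hgW⟩
    by_contra hyX
    exact hWUV hyW ((hUV ▸ ⟨hyT, hyX⟩ : y ∈ U ∪ V).imp (subset_closure ·) (subset_closure ·))
  refine hX.2 K hKX (fun y ⟨hyK, hyT⟩ =>
    ⟨hyT, closure_minimal inter_subset_right (isClosed_closure.sdiff isOpen_interior) hyK⟩) ?_
  rw [sepUnion_iff_not_isPreconnected]
  intro hpre
  obtain ⟨u, hu⟩ := hU
  have hu' : u ∈ T \ X := hUV ▸ .inl hu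
  obtain ⟨y, -, hyW, hyW'⟩ := hpre W (closure W)ᶜ isOpen_interior isClosed_closure.isOpen_compl
    (fun y ⟨hyT, hyK⟩ => by
      by_contra h
      simp only [mem_union, mem_compl_iff, not_or, not_not] at h
      exact hyK ⟨hyT, h.2, h.1⟩)
    ⟨g, ⟨hgT, fun h => h.2.2 hgW⟩, hgW⟩
    ⟨u, ⟨hu'.1, fun h => hu'.2 (hKX.1 h)⟩, fun h => hWUV h (.inl (subset_closure hu))⟩
  exact hyW' (subset_closure hyW)

theorem eq_inter_closure [RegularSpace α] (hX : IsIrredCutSet T X) (hUV : T \ X = U ∪ V)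
    (hU : U.Nonempty) (hV : V.Nonempty) (hcUV : closure U ∩ V = ∅) (hUcV : U ∩ closure V = ∅) :
    X = T ∩ closure U ∩ closure V := by
  have hT := hX.subset_closure_union hUV hU
  have hYX : T ∩ closure U ∩ closure V ⊆ X := by
    rintro y ⟨⟨hyT, hyU⟩, hyV⟩
    by_contra hyX
    rcases (hUV ▸ ⟨hyT, hyX⟩ : y ∈ U ∪ V) with h | h
    · exact hUcV.subset ⟨h, hyV⟩
    · exact hcUV.subset ⟨hyU, h⟩
  refine (hYX.ssubset_or_eq.resolve_left fun hss => hX.2 _ hss ?_ ?_).symm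
  · exact fun y ⟨hy, hyT⟩ => ⟨⟨hyT, closure_minimal (fun z hz => hz.1.2) isClosed_closure hy⟩,
      closure_minimal (fun z hz => hz.2) isClosed_closure hy⟩
  rw [sepUnion_iff_not_isPreconnected]
  intro hpre
  obtain ⟨u, hu⟩ := hU
  obtain ⟨v, hv⟩ := hV
  have hu' : u ∈ T \ X := hUV ▸ .inl hu
  have hv' : v ∈ T \ X := hUV ▸ .inr hv
  obtain ⟨y, ⟨hyT, -⟩, hyV, hyU⟩ := hpre (closure V)ᶜ (closure U)ᶜ isClosed_closure.isOpen_compl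
    isClosed_closure.isOpen_compl
    (fun y ⟨hyT, hyY⟩ => by
      by_contra h
      simp only [mem_union, mem_compl_iff, not_or, not_not] at h
      exact hyY ⟨⟨hyT, h.2⟩, h.1⟩)
    ⟨u, ⟨hu'.1, fun h => hu'.2 (hYX h)⟩, fun h => hUcV.subset ⟨hu, h⟩⟩
    ⟨v, ⟨hv'.1, fun h => hv'.2 (hYX h)⟩, fun h => hcUV.subset ⟨h, hv⟩⟩
  exact (hT hyT).elim hyU hyV

theorem isClosed [RegularSpace α] (hX : IsIrredCutSet T X) (hT : IsClosed T) : IsClosed X := by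
  obtain ⟨-, U, V, hUV, hU, hV, hcUV, hUcV⟩ := hX.1
  rw [hX.eq_inter_closure hUV hU hV hcUV hUcV]
  exact (hT.inter isClosed_closure).inter isClosed_closure

theorem exists_inter_eq_singleton [RegularSpace α] (hX : IsIrredCutSet T X) {x : α} (hx : x ∈ X)
    {O : Set α} (hOX : O ∩ X ⊆ {x}) {ι : Type*} [Finite ι] {P : ι → Set α}
    (hPc : ∀ i, IsClosed (P i)) (hPT : ∀ i, P i ⊆ T) (hTP : T ⊆ ⋃ i, P i)
    (hPO : ∀ i, x ∈ P i → P i ⊆ O) (hPcut : ∀ i, x ∈ P i → ¬SepUnion (P i \ {x})) :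
    ∃ i j, P i ∩ P j = {x} := by
  obtain ⟨-, U, V, hUV, hU, hV, hcUV, hUcV⟩ := hX.1
  have hxUV := hX.eq_inter_closure hUV hU hV hcUV hUcV ▸ hx
  have hsplit : ∀ i, x ∈ P i → P i \ {x} ⊆ U ∪ V := by
    rintro i hxi y ⟨hyP, hyx⟩
    rw [← hUV]
    exact ⟨hPT i hyP, fun hyX => hyx (hOX ⟨hPO i hxi hyP, hyX⟩)⟩
  have hUT : U ⊆ T := fun u hu => (hUV ▸ .inl hu : u ∈ T \ X).1
  have hVT : V ⊆ T := fun v hv => (hUV ▸ .inr hv : v ∈ T \ X).1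
  have hxU : x ∉ U := fun h => (hUV ▸ .inl h : x ∈ T \ X).2 hx
  have hxV : x ∉ V := fun h => (hUV ▸ .inr h : x ∈ T \ X).2 hx
  have hnotboth : ∀ i, x ∈ P i → (P i ∩ U).Nonempty → (P i ∩ V).Nonempty → False := by
    rintro i hxi ⟨u, hui, hu⟩ ⟨v, hvi, hv⟩
    exact hPcut i hxi (sepUnion_of_subset_union hcUV hUcV (hsplit i hxi)
      ⟨u, ⟨hui, fun h => hxU (h ▸ hu)⟩, hu⟩ ⟨v, ⟨hvi, fun h => hxV (h ▸ hv)⟩, hv⟩)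
  obtain ⟨i, hxi, hiU⟩ := exists_mem_inter_nonempty_of_mem_closure hPc (hUT.trans hTP) hxUV.1.2
  obtain ⟨j, hxj, hjV⟩ := exists_mem_inter_nonempty_of_mem_closure hPc (hVT.trans hTP) hxUV.2
  refine ⟨i, j, eq_singleton_iff_unique_mem.2 ⟨⟨hxi, hxj⟩, fun y ⟨hyi, hyj⟩ => ?_⟩⟩
  by_contra hyx
  rcases hsplit i hxi ⟨hyi, hyx⟩ with hyU | hyV
  · rcases hsplit j hxj ⟨hyj, hyx⟩ with hyU' | hyV'
    · exact hnotboth j hxj ⟨y, hyj, hyU'⟩ hjV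
    · exact hUcV.subset ⟨hyU, subset_closure hyV'⟩
  · exact hnotboth i hxi hiU ⟨y, hyi, hyV⟩

end IsIrredCutSet

section WordMap

variable {α : Type*} {q : ℕ} {f : Fin q → α → α}

theorem wordMap_cons (i : Fin q) (l : List (Fin q)) : wordMap f (i :: l) = f i ∘ wordMap f l :=
  rfl

theorem wordMap_injective (hf : ∀ i, Function.Injective (f i)) (l : List (Fin q)) :
    Function.Injective (wordMap f l) := by
  induction l with
  | nil => exact Function.injective_id
  | cons i l ih => exact (hf i).comp ih

theorem wordMap_image_subset {T : Set α} (hT : ∀ i, f i '' T ⊆ T) (l : List (Fin q)) :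
    wordMap f l '' T ⊆ T := by
  induction l with
  | nil => exact (image_id T).subset
  | cons i l ih => rw [wordMap_cons, image_comp]; exact (image_mono ih).trans (hT i)

theorem subset_iUnion_wordMap_image {T : Set α} (hT : T ⊆ ⋃ i, f i '' T) (n : ℕ) :
    T ⊆ ⋃ l : List.Vector (Fin q) n, wordMap f l.1 '' T := by
  induction n with
  | zero => exact fun t ht => mem_iUnion.2 ⟨List.Vector.nil, t, ht, rfl⟩
  | succ n ih =>
    intro t ht
    obtain ⟨i, s, hs, rfl⟩ := mem_iUnion.1 (hT ht)
    obtain ⟨l, hl⟩ := mem_iUnion.1 (ih hs)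
    refine mem_iUnion.2 ⟨i ::ᵥ l, ?_⟩
    rw [List.Vector.cons_val, wordMap_cons, image_comp]
    exact mem_image_of_mem _ hl

theorem lipschitzWith_wordMap [PseudoEMetricSpace α] {r : NNReal}
    (hf : ∀ i, LipschitzWith r (f i)) (l : List (Fin q)) :
    LipschitzWith (r ^ l.length) (wordMap f l) := by
  induction l with
  | nil => exact LipschitzWith.id
  | cons i l ih => rw [wordMap_cons, List.length_cons, pow_succ']; exact (hf i).comp ih

theorem exists_wordMap_image_subset_of_mem_nhds [PseudoMetricSpace α] {r : NNReal} (hr : r < 1)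
    (hf : ∀ i, LipschitzWith r (f i)) {T : Set α} (hT : Bornology.IsBounded T) {x : α}
    {O : Set α} (hO : O ∈ 𝓝 x) :
    ∃ n > 0, ∀ l : List (Fin q), l.length = n → x ∈ wordMap f l '' T → wordMap f l '' T ⊆ O := by
  obtain ⟨ε, hε, hball⟩ := Metric.mem_nhds_iff.1 hO
  have htend : Tendsto (fun n : ℕ => (r : ENNReal) ^ n * Metric.ediam T) atTop (𝓝 0) := by
    simpa using ENNReal.Tendsto.mul_const
      (ENNReal.tendsto_pow_atTop_nhds_zero_of_lt_one (by exact_mod_cast hr)) (.inr hT.ediam_ne_top)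
  obtain ⟨n, hn1, hn⟩ := ((eventually_gt_atTop 0).and
    (htend.eventually_lt_const (ENNReal.ofReal_pos.2 hε))).exists
  refine ⟨n, hn1, fun l hl hx y hy => hball ?_⟩
  rw [Metric.mem_ball, ← edist_lt_ofReal]
  calc edist y x ≤ Metric.ediam (wordMap f l '' T) := Metric.edist_le_ediam_of_mem hy hx
    _ ≤ (r ^ l.length : NNReal) * Metric.ediam T := (lipschitzWith_wordMap hf l).ediam_image_le T
    _ < ENNReal.ofReal ε := by rwa [hl, ENNReal.coe_pow]

end WordMap

theorem exists_lipschitzWith_lt_one_of_contractingWith {α ι : Type*} [EMetricSpace α] [Fintype ι]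
    {f : ι → α → α} (hf : ∀ i, ∃ K, ContractingWith K (f i)) :
    ∃ r < 1, ∀ i, LipschitzWith r (f i) := by
  choose K hK using hf
  exact ⟨Finset.univ.sup K, (Finset.sup_lt_iff zero_lt_one).2 fun i _ => (hK i).1,
    fun i => (hK i).2.weaken (Finset.le_sup (Finset.mem_univ i))⟩

theorem statement1_general {α : Type*} [MetricSpace α] {q : ℕ}
    (f : Fin q → α → α)
    (hinj : ∀ i, Function.Injective (f i))
    (hcon : ∀ i, ∃ K, ContractingWith K (f i))
    (T : Set α) (hcpt : IsCompact T)
    (hattr : T = ⋃ i, f i '' T)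
    (hnosing : ∀ a b : List (Fin q), a ≠ [] → b ≠ [] →
      ¬ ∃ x, wordMap f a '' T ∩ wordMap f b '' T = {x}) :
    (∃ z ∈ T, SepUnion (T \ {z})) ∨
      ∀ X : Set α, IsIrredCutSet T X → Perfect X := by
  refine or_iff_not_imp_left.2 fun hcut X hX => ⟨hX.isClosed hcpt.isClosed, fun x hx => ?_⟩
  by_contra hiso
  obtain ⟨O, hO, hOX⟩ : ∃ O ∈ 𝓝 x, O ∩ X ⊆ {x} := by
    simpa [accPt_iff_nhds, subset_def] using hiso
  obtain ⟨r, hr, hf⟩ := exists_lipschitzWith_lt_one_of_contractingWith hcon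
  have hcont (l : List (Fin q)) : Continuous (wordMap f l) :=
    (lipschitzWith_wordMap hf l).continuous
  obtain ⟨n, hn, hsmall⟩ := exists_wordMap_image_subset_of_mem_nhds hr hf hcpt.isBounded hO
  obtain ⟨a, b, hab⟩ := hX.exists_inter_eq_singleton hx hOX
    (P := fun l : List.Vector (Fin q) n => wordMap f l.1 '' T)
    (fun l => (hcpt.image (hcont l.1)).isClosed)
    (fun l => wordMap_image_subset (iUnion_subset_iff.1 hattr.ge) l.1)
    (subset_iUnion_wordMap_image hattr.le n) (fun l => hsmall l.1 l.2)
    (fun l ⟨z, hzT, hzx⟩ => hzx ▸ not_sepUnion_image_diff_singleton (hcont l.1)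
      (wordMap_injective hinj l.1) fun h => hcut ⟨z, hzT, h⟩)
  have hne (l : List.Vector (Fin q) n) : l.1 ≠ [] := List.ne_nil_of_length_pos (l.2.symm ▸ hn)
  exact hnosing a.1 b.1 (hne a) (hne b) ⟨x, hab⟩

theorem statement1 {α : Type*} [MetricSpace α] [CompleteSpace α] {q : ℕ}
    (f : Fin q → α → α)
    (hinj : ∀ i, Function.Injective (f i))
    (hcon : ∀ i, ∃ K, ContractingWith K (f i))
    (T : Set α) (hne : T.Nonempty) (hcpt : IsCompact T)
    (hattr : T = ⋃ i, f i '' T) (hconn : IsConnected T)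
    (hnosing : ∀ a b : List (Fin q), a ≠ [] → b ≠ [] →
      ¬ ∃ x, wordMap f a '' T ∩ wordMap f b '' T = {x}) :
    (∃ z ∈ T, SepUnion (T \ {z})) ∨
      ∀ X : Set α, IsIrredCutSet T X → Perfect X :=
  statement1_general f hinj hcon T hcpt hattr hnosing
end

section
/- Let T be a connected ℤ^d-tile T(A,D). Then one of the following alternatives holds: either T has a cut point, or every irreducible cut set X of T admits a partition X = X' ∪ X₁ (X' being the derived set of X) with X₁ contained in the set Ẽ := ⋃_{k∈ℕ} ⋃_{v,s∈ℤ^d, T∩(T+s) a singleton} ( A^{-k}(T ∩ (T+s)) + A^{-k}v ); in particular every isolated point of X lies in Ẽ. -/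
open Set Filter Topology Matrix

noncomputable section

/-- The real matrix obtained from an integer matrix. -/
def rmat {d : ℕ} (A : Matrix (Fin d) (Fin d) ℤ) : Matrix (Fin d) (Fin d) ℝ :=
  A.map Int.cast

/-- The real vector obtained from an integer vector. -/
def rvec {d : ℕ} (v : Fin d → ℤ) : Fin d → ℝ := fun i => (v i : ℝ)

/-- The translate `T + v` of `T` by a lattice vector `v`. -/
def trT {d : ℕ} (T : Set (Fin d → ℝ)) (v : Fin d → ℤ) : Set (Fin d → ℝ) :=
  (fun x => x + rvec v) '' T

/-- Every complex eigenvalue of `A` has modulus `> 1`. -/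
def Expanding {d : ℕ} (A : Matrix (Fin d) (Fin d) ℤ) : Prop :=
  ∀ μ : ℂ, Module.End.HasEigenvalue (Matrix.toLin' (A.map (Int.cast : ℤ → ℂ))) μ →
    1 < ‖μ‖

/-- `D` is a complete set of coset representatives of `ℤ^d / A ℤ^d`. -/
def ResidueSystem {d : ℕ} (A : Matrix (Fin d) (Fin d) ℤ) (D : Set (Fin d → ℤ)) : Prop :=
  ∀ x : Fin d → ℤ, ∃! e, e ∈ D ∧ ∃ y : Fin d → ℤ, x = A.mulVec y + e

/-- `T` is the attractor `T(A,D)`: nonempty, compact, with `A·T = T + D`. -/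
def SelfAffine {d : ℕ} (A : Matrix (Fin d) (Fin d) ℤ) (D : Set (Fin d → ℤ))
    (T : Set (Fin d → ℝ)) : Prop :=
  T.Nonempty ∧ IsCompact T ∧
    (rmat A).mulVec '' T = ⋃ e ∈ D, (fun x => x + rvec e) '' T

/-- `T = T(A,D)` is a `ℤ^d`-tile: a self-affine attractor for an expanding integer
matrix and a standard digit set, with nonempty interior, tiling `ℝ^d` by `ℤ^d`. -/
def IsZdTile {d : ℕ} (A : Matrix (Fin d) (Fin d) ℤ) (D : Set (Fin d → ℤ))
    (T : Set (Fin d → ℝ)) : Prop :=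
  Expanding A ∧ ResidueSystem A D ∧ SelfAffine A D T ∧ (interior T).Nonempty ∧
    (⋃ v : Fin d → ℤ, trT T v) = univ ∧
    Pairwise fun v₁ v₂ : Fin d → ℤ => interior (trT T v₁) ∩ trT T v₂ = ∅

/-- `V_n = D + A·D + ⋯ + A^{n-1}·D`, the vertex set of the `n`-th Hata graph. -/
def Vset {d : ℕ} (A : Matrix (Fin d) (Fin d) ℤ) (D : Set (Fin d → ℤ)) (n : ℕ) :
    Set (Fin d → ℤ) :=
  {v | ∃ dig : Fin n → (Fin d → ℤ), (∀ k, dig k ∈ D) ∧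
    v = ∑ k : Fin n, (A ^ (k : ℕ)).mulVec (dig k)}

/-- The set of children `C(U) = A·U + D`. -/
def childSet {d : ℕ} (A : Matrix (Fin d) (Fin d) ℤ) (D : Set (Fin d → ℤ))
    (U : Set (Fin d → ℤ)) : Set (Fin d → ℤ) :=
  {w | ∃ u ∈ U, ∃ e ∈ D, w = A.mulVec u + e}

/-- `X_n(W) = ⋃_{v ∈ W} A^{-n}(T + v)`. -/
def XnSet {d : ℕ} (A : Matrix (Fin d) (Fin d) ℤ) (T : Set (Fin d → ℝ)) (n : ℕ)
    (W : Set (Fin d → ℤ)) : Set (Fin d → ℝ) :=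
  ⋃ v ∈ W, ((rmat A)⁻¹ ^ n).mulVec '' trT T v

/-- The subgraph of the `n`-th Hata graph induced on `W` is connected:
any two vertices of `W` are joined by a path inside `W`, consecutive tiles meeting. -/
def HataConn {d : ℕ} (T : Set (Fin d → ℝ)) (W : Set (Fin d → ℤ)) : Prop :=
  ∀ v ∈ W, ∀ w ∈ W,
    Relation.ReflTransGen (fun a b => a ∈ W ∧ b ∈ W ∧ (trT T a ∩ trT T b).Nonempty) v w

/-!
Suppose `T` has no cut point. Then `T` minus any point is connected, and so is every subtile
`A^{-k}(T + v)` minus any of its points. An irreducible cut set `X` is closed in `T`. Let `x` be an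
isolated point of `X`. Since `A^{-k}` contracts, for large `k` the level-`k` subtiles through `x`
meet `X` only in `x`, and by local finiteness their union is a neighbourhood of `x` in `T`. If two
of them always shared a point besides `x`, this neighbourhood minus `x` would be connected, hence
on one side of the separation of `T \ X`, and `X \ {x}` would still cut `T`. So two subtiles
through `x` meet exactly in `x`, and rescaling by `A^k` gives a singleton `T ∩ (T + s)`.
-/

section CutSets

variable {α : Type*} [TopologicalSpace α]

theorem isPreconnected_of_not_sepUnion {S : Set α} (h : ¬ SepUnion S) : IsPreconnected S := by
  rw [isPreconnected_iff_subset_of_disjoint]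
  intro u v hu hv hSuv huv
  by_contra! hne
  have hsep : ∀ {u v : Set α}, IsOpen v → S ∩ (u ∩ v) = ∅ → closure (S ∩ u) ∩ (S ∩ v) = ∅ := by
    intro u v hv huv
    refine subset_empty_iff.mp fun z ⟨hz, hzS, hzv⟩ => ?_
    obtain ⟨y, hyv, hyS, hyu⟩ := mem_closure_iff.mp hz v hv hzv
    exact (eq_empty_iff_forall_notMem.mp huv) y ⟨hyS, hyu, hyv⟩
  obtain ⟨a, haS, hav⟩ := not_subset.mp hne.2
  obtain ⟨b, hbS, hbu⟩ := not_subset.mp hne.1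
  refine h ⟨S ∩ u, S ∩ v, ?_, ⟨a, haS, (hSuv haS).resolve_right hav⟩,
    ⟨b, hbS, (hSuv hbS).resolve_left hbu⟩, hsep hv huv, ?_⟩
  · rw [← inter_union_distrib_left, inter_eq_left.mpr hSuv]
  · rw [inter_comm, hsep hu (by rwa [inter_comm v])]

theorem IsPreconnected.subset_or_subset_of_separated {P U V : Set α} (hP : IsPreconnected P)
    (hPUV : P ⊆ U ∪ V) (h₁ : closure U ∩ V = ∅) (h₂ : U ∩ closure V = ∅) : P ⊆ U ∨ P ⊆ V := by
  have hU : ∀ p ∈ U, p ∉ closure V := fun p hp hpV => h₂.subset ⟨hp, hpV⟩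
  have hV : ∀ p ∈ V, p ∉ closure U := fun p hp hpU => h₁.subset ⟨hpU, hp⟩
  rcases isPreconnected_iff_subset_of_disjoint.mp hP (closure V)ᶜ (closure U)ᶜ
    isClosed_closure.isOpen_compl isClosed_closure.isOpen_compl
    (fun p hp => (hPUV hp).imp (hU p) (hV p))
    (subset_empty_iff.mp fun p ⟨hp, hpV, hpU⟩ =>
      (hPUV hp).elim (fun h => hpU (subset_closure h)) (fun h => hpV (subset_closure h)))
    with h | h
  · exact .inl fun p hp => (hPUV hp).resolve_right fun hpV => h hp (subset_closure hpV)
  · exact .inr fun p hp => (hPUV hp).resolve_left fun hpU => h hp (subset_closure hpU)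

theorem sepUnion_diff_diff_singleton [T1Space α] {T X U V O : Set α} {x : α}
    (hTX : T \ X = U ∪ V) (hV : V.Nonempty) (h₁ : closure U ∩ V = ∅) (h₂ : U ∩ closure V = ∅)
    (hxT : x ∈ T) (hxX : x ∈ X) (hO : O ∈ 𝓝 x) (hOU : (O ∩ T) \ {x} ⊆ U) :
    SepUnion (T \ (X \ {x})) := by
  have hVT : V ⊆ T \ X := hTX ▸ subset_union_right
  have hxV : x ∉ closure V := by
    intro hx
    obtain ⟨y, hyO, hyV⟩ := mem_closure_iff_nhds.mp hx O hO
    have hyx : y ≠ x := fun h => (hVT hyV).2 (h ▸ hxX)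
    exact h₂.subset ⟨hOU ⟨⟨hyO, (hVT hyV).1⟩, hyx⟩, subset_closure hyV⟩
  refine ⟨U ∪ {x}, V, ?_, ⟨x, .inr rfl⟩, hV, ?_, ?_⟩
  · rw [sdiff_sdiff_right, inter_singleton_of_mem hxT, hTX, union_right_comm]
  · rw [closure_union, closure_singleton, union_inter_distrib_right, h₁,
      singleton_inter_eq_empty.mpr fun h => (hVT h).2 hxX, union_empty]
  · rw [union_inter_distrib_right, h₂, singleton_inter_eq_empty.mpr hxV, union_empty]

end CutSets

section IrreducibleCutSets

variable {α : Type*} [TopologicalSpace α] {T X : Set α}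

/-- The part of `T` outside disjoint open neighbourhoods of the two sides of `T \ X` is a
relatively closed cut set inside `X`, hence all of `X`. -/
theorem IsIrredCutSet.closure_inter_subset [CompletelyNormalSpace α] (hX : IsIrredCutSet T X) :
    closure X ∩ T ⊆ X := by
  obtain ⟨⟨hXT, U, V, hTX, hU, hV, h₁, h₂⟩, hmin⟩ := hX
  obtain ⟨G, H, hG, hH, hUG, hVH, hGH⟩ := separatedNhds_iff_disjoint.mpr <|
    completely_normal (disjoint_iff_inter_eq_empty.mpr h₁) (disjoint_iff_inter_eq_empty.mpr h₂)
  have hTXGH : T \ X ⊆ G ∪ H := hTX ▸ union_subset_union hUG hVH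
  set F := T \ (G ∪ H)
  have hFX : F ⊆ X := fun z ⟨hzT, hz⟩ => by_contra fun hzX => hz (hTXGH ⟨hzT, hzX⟩)
  have hFcl : closure F ∩ T ⊆ F := fun z ⟨hz, hzT⟩ =>
    ⟨hzT, closure_minimal (sdiff_subset_compl _ _) (hG.union hH).isClosed_compl hz⟩
  have hcut : SepUnion (T \ F) := by
    refine ⟨T ∩ G, T ∩ H, ?_, ?_, ?_, ?_, ?_⟩
    · rw [sdiff_sdiff_right_self, inter_union_distrib_left]
    · obtain ⟨u, hu⟩ := hU
      exact ⟨u, (hTX ▸ subset_union_left : U ⊆ T \ X) hu |>.1, hUG hu⟩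
    · obtain ⟨v, hv⟩ := hV
      exact ⟨v, (hTX ▸ subset_union_right : V ⊆ T \ X) hv |>.1, hVH hv⟩
    · exact subset_empty_iff.mp fun z ⟨hz, _, hzH⟩ =>
        (hGH.closure_left hH).le_bot ⟨closure_mono inter_subset_right hz, hzH⟩
    · exact subset_empty_iff.mp fun z ⟨⟨_, hzG⟩, hz⟩ =>
        (hGH.symm.closure_left hG).le_bot ⟨closure_mono inter_subset_right hz, hzG⟩
  have hFeq : F = X := by_contra fun hne => hmin F (ssubset_of_ne_of_subset hne hFX) hFcl hcut
  exact hFeq ▸ hFcl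

theorem IsIrredCutSet.not_diff_singleton_subset [T5Space α] {U V O : Set α} {x : α}
    (hX : IsIrredCutSet T X) (hTX : T \ X = U ∪ V) (hV : V.Nonempty) (h₁ : closure U ∩ V = ∅)
    (h₂ : U ∩ closure V = ∅) (hx : x ∈ X) (hO : O ∈ 𝓝 x) (hOX : O ∩ X ⊆ {x}) :
    ¬ (O ∩ T) \ {x} ⊆ U := by
  intro hOU
  refine hX.2 (X \ {x}) (sdiff_singleton_ssubset.mpr hx) (fun z ⟨hz, hzT⟩ => ⟨?_, ?_⟩)
    (sepUnion_diff_diff_singleton hTX hV h₁ h₂ (hX.1.1 hx) hx hO hOU)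
  · exact hX.closure_inter_subset ⟨closure_mono sdiff_subset hz, hzT⟩
  · rintro rfl
    obtain ⟨y, hyO, hyX, hyz⟩ := mem_closure_iff_nhds.mp hz O hO
    exact hyz (hOX ⟨hyO, hyX⟩)

theorem IsIrredCutSet.exists_inter_eq_singleton_s2 [T5Space α] (hX : IsIrredCutSet T X) {ι : Type*}
    {S : ι → Set α} {I : Set ι} (hT : T = ⋃ i ∈ I, S i) (hlf : LocallyFinite S)
    (hcl : ∀ i, IsClosed (S i)) {x : α} (hx : x ∈ X)
    (hpre : ∀ i ∈ I, x ∈ S i → IsPreconnected (S i \ {x}))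
    (hsmall : ∀ i ∈ I, x ∈ S i → S i ∩ X ⊆ {x}) : ∃ i ∈ I, ∃ j ∈ I, S i ∩ S j = {x} := by
  by_contra! hne
  obtain ⟨hXT, U, V, hTX, hU, hV, h₁, h₂⟩ := hX.1
  set J := {i ∈ I | x ∈ S i}
  set O := ⋂ (i) (_ : x ∉ S i), (S i)ᶜ
  have hO : O ∈ 𝓝 x := hlf.iInter_compl_mem_nhds hcl x
  have hOT : O ∩ T ⊆ ⋃ i ∈ J, S i := by
    rintro y ⟨hyO, hyT⟩
    obtain ⟨i, hi, hyi⟩ := mem_iUnion₂.mp (hT ▸ hyT)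
    exact mem_biUnion ⟨hi, by_contra fun hxi => mem_iInter₂.mp hyO i hxi hyi⟩ hyi
  have hNX : (⋃ i ∈ J, S i) ∩ X ⊆ {x} := by
    rintro y ⟨hy, hyX⟩
    obtain ⟨i, ⟨hi, hxi⟩, hyi⟩ := mem_iUnion₂.mp hy
    exact hsmall i hi hxi ⟨hyi, hyX⟩
  have hOX : O ∩ X ⊆ {x} := fun y ⟨hyO, hyX⟩ => hNX ⟨hOT ⟨hyO, hXT hyX⟩, hyX⟩
  have hNpre : IsPreconnected (⋃ i ∈ J, S i \ {x}) := by
    refine IsPreconnected.biUnion_of_reflTransGen (fun i hi => hpre i hi.1 hi.2)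
      fun i hi j hj => .single ⟨?_, hi⟩
    obtain ⟨y, ⟨hyi, hyj⟩, hyx⟩ := nonempty_of_not_subset fun h =>
      hne i hi.1 j hj.1 (subset_antisymm h (singleton_subset_iff.mpr ⟨hi.2, hj.2⟩))
    exact ⟨y, ⟨hyi, hyx⟩, hyj, hyx⟩
  have hNUV : (⋃ i ∈ J, S i \ {x}) ⊆ U ∪ V := by
    rintro y hy
    obtain ⟨i, hi, hyi, hyx⟩ := mem_iUnion₂.mp hy
    rw [← hTX]
    exact ⟨hT ▸ mem_biUnion hi.1 hyi, fun hyX => hyx (hNX ⟨mem_biUnion hi hyi, hyX⟩)⟩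
  have hOJ : (O ∩ T) \ {x} ⊆ ⋃ i ∈ J, S i \ {x} := by
    rintro y ⟨hy, hyx⟩
    obtain ⟨i, hi, hyi⟩ := mem_iUnion₂.mp (hOT hy)
    exact mem_biUnion hi ⟨hyi, hyx⟩
  rcases hNpre.subset_or_subset_of_separated hNUV h₁ h₂ with hNU | hNV
  · exact hX.not_diff_singleton_subset hTX hV h₁ h₂ hx hO hOX (hOJ.trans hNU)
  · exact hX.not_diff_singleton_subset (hTX.trans (union_comm U V)) hU
      (by rwa [inter_comm]) (by rwa [inter_comm]) hx hO hOX (hOJ.trans hNV)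

end IrreducibleCutSets

attribute [local instance] Matrix.linftyOpNormedAddCommGroup Matrix.linftyOpNormedRing
  Matrix.linftyOpNormedAlgebra

theorem tendsto_pow_nhds_zero_of_forall_norm_lt_one {B : Type*} [NormedRing B]
    [NormedAlgebra ℂ B] [CompleteSpace B] {a : B} (ha : ∀ z ∈ spectrum ℂ a, ‖z‖ < 1) :
    Tendsto (fun n => a ^ n) atTop (𝓝 0) := by
  rcases subsingleton_or_nontrivial B with hB | hB
  · simpa only [Subsingleton.elim _ (0 : B)] using tendsto_const_nhds
  have hrad : spectralRadius ℂ a < (1 : NNReal) :=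
    spectrum.spectralRadius_lt_of_forall_lt a fun z hz => by exact_mod_cast ha z hz
  obtain ⟨s, hs, hs1⟩ := ENNReal.lt_iff_exists_nnreal_btwn.mp hrad
  refine squeeze_zero_norm' ?_ (tendsto_pow_atTop_nhds_zero_of_lt_one s.coe_nonneg
    (by exact_mod_cast hs1))
  have hgelfand :=
    (spectrum.pow_nnnorm_pow_one_div_tendsto_nhds_spectralRadius a).eventually_lt_const hs
  filter_upwards [hgelfand, eventually_gt_atTop 0] with n hn hn0
  rw [one_div, ENNReal.rpow_inv_lt_iff (by positivity), ENNReal.rpow_natCast] at hn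
  exact_mod_cast hn.le

section Expanding

variable {d : ℕ} {A : Matrix (Fin d) (Fin d) ℤ}

theorem Expanding.one_lt_norm_of_mem_spectrum (hA : Expanding A) {μ : ℂ}
    (hμ : μ ∈ spectrum ℂ (A.map (Int.cast : ℤ → ℂ))) : 1 < ‖μ‖ :=
  hA μ (Module.End.hasEigenvalue_iff_mem_spectrum.mpr (by rwa [Matrix.spectrum_toLin']))

theorem Expanding.isUnit_map_complex (hA : Expanding A) : IsUnit (A.map (Int.cast : ℤ → ℂ)) := by
  by_contra h
  exact absurd (hA.one_lt_norm_of_mem_spectrum ((spectrum.zero_mem_iff ℂ).mpr h)) (by simp)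

theorem Expanding.isUnit_det_rmat (hA : Expanding A) : IsUnit (rmat A).det := by
  have hdet {R : Type} [CommRing R] : (A.map (Int.cast : ℤ → R)).det = A.det :=
    (RingHom.map_det (Int.castRingHom R) A).symm
  have hC := (Matrix.isUnit_iff_isUnit_det _).mp hA.isUnit_map_complex
  rw [hdet, isUnit_iff_ne_zero, Int.cast_ne_zero] at hC
  rwa [rmat, hdet, isUnit_iff_ne_zero, Int.cast_ne_zero]

theorem Expanding.norm_lt_one_of_mem_spectrum_inv (hA : Expanding A) {z : ℂ}
    (hz : z ∈ spectrum ℂ (A.map (Int.cast : ℤ → ℂ))⁻¹) : ‖z‖ < 1 := by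
  rw [← hA.isUnit_map_complex.unit_spec, ← Matrix.coe_units_inv, ← spectrum.map_inv] at hz
  have h := hA.one_lt_norm_of_mem_spectrum (hA.isUnit_map_complex.unit_spec ▸ hz)
  rw [norm_inv] at h
  exact (one_lt_inv_iff₀.mp h).2

theorem Matrix.linfty_opNorm_map_ofReal {m n : Type*} [Fintype m] [Fintype n]
    (M : Matrix m n ℝ) : ‖M.map ((↑) : ℝ → ℂ)‖ = ‖M‖ := by
  simp [Matrix.linfty_opNorm_def]

theorem Expanding.tendsto_norm_rmat_inv_pow (hA : Expanding A) :
    Tendsto (fun k => ‖(rmat A)⁻¹ ^ k‖) atTop (𝓝 0) := by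
  have hmap : Complex.ofRealHom.mapMatrix (rmat A) = A.map (Int.cast : ℤ → ℂ) := by
    ext i j; simp [rmat]
  have hinv : Complex.ofRealHom.mapMatrix (rmat A)⁻¹ = (A.map (Int.cast : ℤ → ℂ))⁻¹ := by
    refine (Matrix.inv_eq_left_inv ?_).symm
    rw [← hmap, ← map_mul, Matrix.nonsing_inv_mul _ hA.isUnit_det_rmat, map_one]
  have hC := (tendsto_pow_nhds_zero_of_forall_norm_lt_one
    fun z hz => hA.norm_lt_one_of_mem_spectrum_inv hz).norm
  rw [norm_zero] at hC
  refine hC.congr fun k => ?_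
  rw [← hinv, ← map_pow, RingHom.mapMatrix_apply]
  exact Matrix.linfty_opNorm_map_ofReal _

end Expanding

section Subtiles

variable {d : ℕ}

theorem rvec_zero : rvec (0 : Fin d → ℤ) = 0 := by
  ext; simp [rvec]

theorem rvec_add (a b : Fin d → ℤ) : rvec (a + b) = rvec a + rvec b := by
  ext; simp [rvec]

theorem rvec_sub (a b : Fin d → ℤ) : rvec (a - b) = rvec a - rvec b := by
  ext; simp [rvec]

theorem rvec_mulVec (A : Matrix (Fin d) (Fin d) ℤ) (v : Fin d → ℤ) :
    rvec (A.mulVec v) = (rmat A).mulVec (rvec v) := by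
  ext; simp [rvec, rmat, Matrix.mulVec, dotProduct]

theorem mem_trT {T : Set (Fin d → ℝ)} {v : Fin d → ℤ} {y : Fin d → ℝ} :
    y ∈ trT T v ↔ y - rvec v ∈ T := by
  simp [trT, sub_eq_add_neg]

theorem trT_sub (T : Set (Fin d → ℝ)) (a b : Fin d → ℤ) :
    (· + rvec a) '' trT T (b - a) = trT T b := by
  ext y
  rw [image_add_right, mem_preimage, mem_trT, mem_trT, rvec_sub,
    show y + -rvec a - (rvec b - rvec a) = y - rvec b by abel]

theorem finite_setOf_rvec_mem {K : Set (Fin d → ℝ)} (hK : IsCompact K) :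
    {v : Fin d → ℤ | rvec v ∈ K}.Finite := by
  have h := Tendsto.pi_map_coprodᵢ fun _ : Fin d => Int.tendsto_coe_cofinite
  rw [coprodᵢ_cofinite, coprodᵢ_cocompact] at h
  exact tendsto_cofinite_cocompact_iff.mp h K hK

theorem locallyFinite_trT {T : Set (Fin d → ℝ)} (hT : IsCompact T) : LocallyFinite (trT T) := by
  refine fun x => ⟨Metric.closedBall x 1, Metric.closedBall_mem_nhds x one_pos,
    (finite_setOf_rvec_mem (((isCompact_closedBall x 1).prod hT).image
      (continuous_fst.sub continuous_snd))).subset ?_⟩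
  rintro v ⟨y, hyv, hyB⟩
  exact ⟨(y, y - rvec v), ⟨hyB, mem_trT.mp hyv⟩, sub_sub_cancel y (rvec v)⟩

def subtile (A : Matrix (Fin d) (Fin d) ℤ) (T : Set (Fin d → ℝ)) (k : ℕ) (v : Fin d → ℤ) :
    Set (Fin d → ℝ) :=
  ((rmat A)⁻¹ ^ k).mulVec '' trT T v

variable {A : Matrix (Fin d) (Fin d) ℤ} {T : Set (Fin d → ℝ)} {k : ℕ} {v w : Fin d → ℤ}
  {x : Fin d → ℝ}

theorem injective_mulVec_rmat_inv_pow (hdet : IsUnit (rmat A).det) (k : ℕ) :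
    Function.Injective ((rmat A)⁻¹ ^ k).mulVec :=
  Matrix.mulVec_injective_iff_isUnit.mpr
    (((Matrix.isUnit_iff_isUnit_det _).mpr (Matrix.isUnit_nonsing_inv_det _ hdet)).pow k)

theorem injective_mulVec_rmat_inv_pow_add (hdet : IsUnit (rmat A).det) (k : ℕ) (c : Fin d → ℝ) :
    Function.Injective fun y => ((rmat A)⁻¹ ^ k).mulVec y + c :=
  fun _ _ h => injective_mulVec_rmat_inv_pow hdet k (add_right_cancel h)

theorem mem_subtile (hdet : IsUnit (rmat A).det) {y : Fin d → ℝ} :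
    y ∈ subtile A T k v ↔ (rmat A ^ k).mulVec y - rvec v ∈ T := by
  have hdetk : IsUnit (rmat A ^ k).det := by rw [Matrix.det_pow]; exact hdet.pow k
  rw [← mem_trT, subtile, Matrix.inv_pow']
  constructor
  · rintro ⟨t, ht, rfl⟩
    rwa [Matrix.mulVec_mulVec, Matrix.mul_nonsing_inv _ hdetk, Matrix.one_mulVec]
  · exact fun hy => ⟨_, hy, by
      rw [Matrix.mulVec_mulVec, Matrix.nonsing_inv_mul _ hdetk, Matrix.one_mulVec]⟩

theorem subtile_eq_image : subtile A T k v =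
    (fun y => ((rmat A)⁻¹ ^ k).mulVec y + ((rmat A)⁻¹ ^ k).mulVec (rvec v)) '' T := by
  simp only [subtile, trT, image_image, Matrix.mulVec_add]

theorem locallyFinite_subtile (hdet : IsUnit (rmat A).det) (hT : IsCompact T) (k : ℕ) :
    LocallyFinite (subtile A T k) := by
  have h : subtile A T k = fun v => (rmat A ^ k).mulVec ⁻¹' trT T v := by
    ext v y; rw [mem_subtile hdet, mem_preimage, mem_trT]
  exact h ▸ (locallyFinite_trT hT).preimage_continuous
    (Continuous.matrix_mulVec continuous_const continuous_id)

theorem isCompact_subtile (hT : IsCompact T) : IsCompact (subtile A T k v) :=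
  subtile_eq_image (A := A) ▸ hT.image (by fun_prop)

theorem isPreconnected_subtile_diff_singleton (hdet : IsUnit (rmat A).det)
    (hT : ∀ p ∈ T, IsPreconnected (T \ {p})) (hx : x ∈ subtile A T k v) :
    IsPreconnected (subtile A T k v \ {x}) := by
  rw [subtile_eq_image] at hx ⊢
  set g := fun y => ((rmat A)⁻¹ ^ k).mulVec y + ((rmat A)⁻¹ ^ k).mulVec (rvec v)
  obtain ⟨p, hp, rfl⟩ := hx
  rw [← image_singleton, ← image_sdiff (injective_mulVec_rmat_inv_pow_add hdet k _)]
  exact (hT p hp).image g (Continuous.continuousOn (by fun_prop))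

theorem dist_le_of_mem_subtile (hT : Bornology.IsBounded T) {y z : Fin d → ℝ}
    (hy : y ∈ subtile A T k v) (hz : z ∈ subtile A T k v) :
    dist y z ≤ ‖(rmat A)⁻¹ ^ k‖ * Metric.diam T := by
  rw [subtile_eq_image] at hy hz
  obtain ⟨a, ha, rfl⟩ := hy
  obtain ⟨b, hb, rfl⟩ := hz
  rw [dist_eq_norm, add_sub_add_right_eq_sub, ← Matrix.mulVec_sub]
  exact (Matrix.linfty_opNorm_mulVec _ _).trans <| mul_le_mul_of_nonneg_left
    (dist_eq_norm a b ▸ Metric.dist_le_diam_of_mem hT ha hb) (norm_nonneg _)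

theorem subtile_inter (hdet : IsUnit (rmat A).det) : subtile A T k v ∩ subtile A T k w =
    (fun y => ((rmat A)⁻¹ ^ k).mulVec y + ((rmat A)⁻¹ ^ k).mulVec (rvec v)) ''
      (T ∩ trT T (w - v)) := by
  rw [subtile, subtile, ← image_inter (injective_mulVec_rmat_inv_pow hdet k), trT, ← trT_sub T v w,
    ← image_inter (add_left_injective _), image_image]
  simp only [Matrix.mulVec_add]

end Subtiles

section SelfAffine

variable {d : ℕ} {A : Matrix (Fin d) (Fin d) ℤ} {D : Set (Fin d → ℤ)} {T : Set (Fin d → ℝ)}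

theorem SelfAffine.mem_iff (hT : SelfAffine A D T) (hdet : IsUnit (rmat A).det)
    {t : Fin d → ℝ} : t ∈ T ↔ ∃ e ∈ D, (rmat A).mulVec t - rvec e ∈ T := by
  have hinj := Matrix.mulVec_injective_iff_isUnit.mpr ((Matrix.isUnit_iff_isUnit_det _).mpr hdet)
  rw [← hinj.mem_set_image, hT.2.2]
  simp only [mem_iUnion, exists_prop]
  exact exists_congr fun e => and_congr_right fun _ => mem_trT

theorem SelfAffine.subtile_eq_iUnion_subtile_succ (hT : SelfAffine A D T)
    (hdet : IsUnit (rmat A).det) (k : ℕ) (v : Fin d → ℤ) :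
    subtile A T k v = ⋃ e ∈ D, subtile A T (k + 1) (A.mulVec v + e) := by
  ext y
  simp only [mem_iUnion, exists_prop, mem_subtile hdet]
  rw [hT.mem_iff hdet]
  refine exists_congr fun e => and_congr_right fun _ => ?_
  rw [Matrix.mulVec_sub, Matrix.mulVec_mulVec, ← pow_succ', rvec_add, rvec_mulVec, sub_sub]

theorem SelfAffine.eq_iUnion_subtile (hT : SelfAffine A D T) (hdet : IsUnit (rmat A).det)
    (k : ℕ) : T = ⋃ v ∈ (childSet A D)^[k] {0}, subtile A T k v := by
  induction k with
  | zero => ext y; simp [mem_subtile hdet, rvec_zero]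
  | succ k ih =>
    conv_lhs => rw [ih]
    rw [Function.iterate_succ_apply']
    simp_rw [hT.subtile_eq_iUnion_subtile_succ hdet k]
    ext y
    simp only [childSet, mem_iUnion, mem_ofPred_eq, exists_prop]
    constructor
    · rintro ⟨v, hv, e, he, hy⟩
      exact ⟨_, ⟨v, hv, e, he, rfl⟩, hy⟩
    · rintro ⟨_, ⟨v, hv, e, he, rfl⟩, hy⟩
      exact ⟨v, hv, e, he, hy⟩

theorem SelfAffine.exists_subtile_inter_eq_singleton (hT : SelfAffine A D T) (hA : Expanding A)
    (hpre : ∀ p ∈ T, IsPreconnected (T \ {p})) {X : Set (Fin d → ℝ)} (hX : IsIrredCutSet T X)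
    {x : Fin d → ℝ} (hx : x ∈ X) (hiso : ¬ AccPt x (𝓟 X)) :
    ∃ k v w, subtile A T k v ∩ subtile A T k w = {x} := by
  have hdet := hA.isUnit_det_rmat
  obtain ⟨U, hU, hUX⟩ : ∃ U ∈ 𝓝 x, ∀ y ∈ U ∩ X, y = x := by
    simpa [accPt_iff_nhds] using hiso
  obtain ⟨ε, hε, hball⟩ := Metric.mem_nhds_iff.mp hU
  obtain ⟨k, hk⟩ := ((hA.tendsto_norm_rmat_inv_pow.mul_const (Metric.diam T)).eventually
    (gt_mem_nhds (by rwa [zero_mul]))).exists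
  obtain ⟨v, -, w, -, h⟩ := hX.exists_inter_eq_singleton_s2 (hT.eq_iUnion_subtile hdet k)
    (locallyFinite_subtile hdet hT.2.1 k) (fun _ => (isCompact_subtile hT.2.1).isClosed) hx
    (fun _ _ hxv => isPreconnected_subtile_diff_singleton hdet hpre hxv)
    (fun _ _ hxv y ⟨hyv, hyX⟩ => hUX y ⟨hball (Metric.mem_ball.mpr
      ((dist_le_of_mem_subtile hT.2.1.isBounded hyv hxv).trans_lt hk)), hyX⟩)
  exact ⟨k, v, w, h⟩

end SelfAffine

theorem statement2_general {d : ℕ} (A : Matrix (Fin d) (Fin d) ℤ) (D : Set (Fin d → ℤ))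
    (T : Set (Fin d → ℝ)) (htile : IsZdTile A D T) :
    (∃ z ∈ T, SepUnion (T \ {z})) ∨
      ∀ X : Set (Fin d → ℝ), IsIrredCutSet T X →
        ∃ X₁ : Set (Fin d → ℝ),
          X₁ ⊆ {x | ∃ k : ℕ, ∃ v s : Fin d → ℤ, (∃ p, T ∩ trT T s = {p}) ∧
              x ∈ (fun y => ((rmat A)⁻¹ ^ k).mulVec y +
                ((rmat A)⁻¹ ^ k).mulVec (rvec v)) '' (T ∩ trT T s)} ∧
          X = {x ∈ X | AccPt x (𝓟 X)} ∪ X₁ := by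
  obtain ⟨hA, -, hSA, -⟩ := htile
  refine or_iff_not_imp_left.mpr fun hcut X hX => ⟨{x ∈ X | ¬ AccPt x (𝓟 X)}, ?_, ?_⟩
  · rintro x ⟨hxX, hiso⟩
    have hpre (p) (hp : p ∈ T) : IsPreconnected (T \ {p}) :=
      isPreconnected_of_not_sepUnion fun h => hcut ⟨p, hp, h⟩
    obtain ⟨k, v, w, h⟩ := hSA.exists_subtile_inter_eq_singleton hA hpre hX hxX hiso
    rw [subtile_inter hA.isUnit_det_rmat] at h
    have hx := h.superset (mem_singleton x)
    refine ⟨k, v, w - v, ?_, hx⟩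
    obtain ⟨p, hp, rfl⟩ := hx
    exact ⟨p, eq_singleton_iff_unique_mem.mpr ⟨hp, fun q hq =>
      injective_mulVec_rmat_inv_pow_add hA.isUnit_det_rmat k _ (h.subset (mem_image_of_mem _ hq))⟩⟩
  · ext x
    by_cases h : AccPt x (𝓟 X) <;> simp [h]

theorem statement2 {d : ℕ} (A : Matrix (Fin d) (Fin d) ℤ) (D : Set (Fin d → ℤ))
    (T : Set (Fin d → ℝ)) (htile : IsZdTile A D T) (hconn : IsConnected T) :
    (∃ z ∈ T, SepUnion (T \ {z})) ∨
      ∀ X : Set (Fin d → ℝ), IsIrredCutSet T X →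
        ∃ X₁ : Set (Fin d → ℝ),
          X₁ ⊆ {x | ∃ k : ℕ, ∃ v s : Fin d → ℤ, (∃ p, T ∩ trT T s = {p}) ∧
              x ∈ (fun y => ((rmat A)⁻¹ ^ k).mulVec y +
                ((rmat A)⁻¹ ^ k).mulVec (rvec v)) '' (T ∩ trT T s)} ∧
          X = {x ∈ X | AccPt x (𝓟 X)} ∪ X₁ :=
  statement2_general A D T htile
end
end
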